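/- Strongly normal pointsystems have uniformly bounded Lagrange basis: if the nodes x_1,...,x_n ∈ [-1,1] satisfy v_k(t) = 1 - (t - x_k) ω''(x_k)/ω'(x_k) ≥ c > 0 for all k and all t ∈ [-1,1] (strong normality), then ∑_{i=1}^n v_i(t) ℓ_i(t)^2 = 1 for all t, and consequently ‖ℓ_i‖_∞ ≤ 1/√c for every i = 1,...,n. -/

import Mathlib

open Finset Polynomial

/-- The `k`-th Lagrange basis polynomial for nodes `x : Fin n → ℝ`. -/
noncomputable def lagBasis {n : ℕ} (x : Fin n → ℝ) (k : Fin n) (t : ℝ) : ℝ :=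
  ∏ j ∈ Finset.univ.erase k, (t - x j) / (x k - x j)

/-- The node polynomial `ω(t) = ∏ (t - x_j)`. -/
noncomputable def omegaPoly {n : ℕ} (x : Fin n → ℝ) : Polynomial ℝ :=
  ∏ j, (Polynomial.X - Polynomial.C (x j))

/-- Fejér's function `v_k(t) = 1 - (t - x_k) ω''(x_k)/ω'(x_k)`. -/
noncomputable def fejerV {n : ℕ} (x : Fin n → ℝ) (k : Fin n) (t : ℝ) : ℝ :=
  1 - (t - x k) *
    ((omegaPoly x).derivative.derivative.eval (x k) / (omegaPoly x).derivative.eval (x k))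

/-!
With `ω = ∏ (X - xⱼ)` and `ℓₖ` the Lagrange basis, the polynomial `P = ∑ vₖ ℓₖ²` has degree at
most `2n - 1`. At a node, `P(xₖ) = 1` and `P'(xₖ) = vₖ'(xₖ) + 2 ℓₖ'(xₖ) = 0`, because writing
`ω = (X - xₖ) N` gives `ω'(xₖ) = N(xₖ)`, `ω''(xₖ) = 2 N'(xₖ)` and `ℓₖ = N / N(xₖ)`. So every node is
a double root of `P - 1`, and `ω² ∣ P - 1` with `deg ω² = 2n` forces `P = 1`. Under strong
normality all summands are nonnegative on `[-1, 1]`, whence `c ℓᵢ² ≤ vᵢ ℓᵢ² ≤ 1`.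
-/

namespace Polynomial

theorem eq_zero_of_natDegree_lt_of_isRoot_of_isRoot_derivative {K ι : Type*} [Field K]
    [Fintype ι] {x : ι → K} (hx : Function.Injective x) {p : K[X]}
    (hdeg : p.natDegree < 2 * Fintype.card ι) (h₀ : ∀ i, p.IsRoot (x i))
    (h₁ : ∀ i, p.derivative.IsRoot (x i)) : p = 0 := by
  by_contra hp
  have hdvd : (∏ i, (X - C (x i))) ^ 2 ∣ p := by
    rw [← Finset.prod_pow]
    refine Fintype.prod_dvd_of_coprime (fun i j hij ↦ (pairwise_coprime_X_sub_C hx hij).pow)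
      fun i ↦ ?_
    rw [← le_rootMultiplicity_iff hp]
    exact (one_lt_rootMultiplicity_iff_isRoot hp).2 ⟨h₀ i, h₁ i⟩
  have := natDegree_le_of_dvd hdvd hp
  simp only [natDegree_pow, natDegree_prod_of_monic _ _ fun i _ ↦ monic_X_sub_C (x i),
    natDegree_X_sub_C, Finset.sum_const, Finset.card_univ, smul_eq_mul, mul_one] at this
  omega

end Polynomial

namespace Lagrange

theorem eval_derivative_derivative_nodal_at_node {R ι : Type*} [CommRing R] [DecidableEq ι]
    {s : Finset ι} {v : ι → R} {i : ι} (hi : i ∈ s) :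
    (nodal s v).derivative.derivative.eval (v i) =
      2 * (nodal (s.erase i) v).derivative.eval (v i) := by
  rw [nodal_eq_mul_nodal_erase hi]
  simp only [derivative_mul, derivative_sub, derivative_X, derivative_C, sub_zero, one_mul,
    derivative_add, eval_add, eval_mul, eval_sub, eval_X, eval_C, sub_self, zero_mul, add_zero]
  ring

section Basis

variable {F ι : Type*} [Field F] [DecidableEq ι] {s : Finset ι} {v : ι → F} {i : ι}

theorem basis_eq_C_nodalWeight_mul_nodal_erase (hi : i ∈ s) :
    Lagrange.basis s v i = C (nodalWeight s v i) * nodal (s.erase i) v := by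
  rw [basis_eq_prod_sub_inv_mul_nodal_div hi, nodal_erase_eq_nodal_div hi]

theorem two_mul_eval_derivative_basis_self (hi : i ∈ s) :
    2 * (Lagrange.basis s v i).derivative.eval (v i) =
      (nodal s v).derivative.derivative.eval (v i) / (nodal s v).derivative.eval (v i) := by
  rw [basis_eq_C_nodalWeight_mul_nodal_erase hi, eval_derivative_derivative_nodal_at_node hi,
    eval_nodal_derivative_eval_node_eq hi, nodalWeight_eq_eval_nodal_erase_inv]
  simp only [derivative_mul, derivative_C, zero_mul, zero_add, eval_mul, eval_C]
  ring

end Basis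

section Fejer

variable {F ι : Type*} [Field F] [Fintype ι] {v : ι → F} {i : ι}

variable (v) in
noncomputable def fejerFactor (i : ι) : F[X] :=
  1 - C ((nodal Finset.univ v).derivative.derivative.eval (v i) /
    (nodal Finset.univ v).derivative.eval (v i)) * (X - C (v i))

theorem natDegree_fejerFactor_le : (fejerFactor v i).natDegree ≤ 1 :=
  (natDegree_sub_le _ _).trans <| max_le (by simp) <|
    (natDegree_C_mul_le _ _).trans (natDegree_X_sub_C (v i)).le

theorem eval_fejerFactor_self : (fejerFactor v i).eval (v i) = 1 := by
  simp [fejerFactor]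

variable [DecidableEq ι]

theorem eval_derivative_fejerFactor_self :
    (fejerFactor v i).derivative.eval (v i) =
      -(2 * (Lagrange.basis Finset.univ v i).derivative.eval (v i)) := by
  rw [two_mul_eval_derivative_basis_self (Finset.mem_univ i)]
  simp [fejerFactor]

theorem natDegree_sum_fejerFactor_mul_basis_sq_lt [Nonempty ι] (hv : Function.Injective v) :
    (∑ i, fejerFactor v i * Lagrange.basis Finset.univ v i ^ 2).natDegree
      < 2 * Fintype.card ι := by
  have hcard := Fintype.card_pos (α := ι)
  refine (natDegree_sum_le_of_forall_le _ _ (n := 1 + 2 * (Fintype.card ι - 1))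
    fun i _ ↦ ?_).trans_lt (by omega)
  refine natDegree_mul_le.trans (add_le_add natDegree_fejerFactor_le ?_)
  refine natDegree_pow_le.trans ?_
  rw [natDegree_basis hv.injOn (Finset.mem_univ i), Finset.card_univ]

theorem sum_fejerFactor_mul_basis_sq [Nonempty ι] (hv : Function.Injective v) :
    ∑ i, fejerFactor v i * Lagrange.basis Finset.univ v i ^ 2 = 1 := by
  have hbasis (i j : ι) :
      (Lagrange.basis Finset.univ v i).eval (v j) = if j = i then 1 else 0 := by
    split_ifs with h
    · exact h ▸ eval_basis_self hv.injOn (Finset.mem_univ j)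
    · exact eval_basis_of_ne (Ne.symm h) (Finset.mem_univ j)
  rw [← sub_eq_zero]
  refine eq_zero_of_natDegree_lt_of_isRoot_of_isRoot_derivative hv ?_ (fun j ↦ ?_) (fun j ↦ ?_)
  · refine (natDegree_sub_le _ _).trans_lt <|
      max_lt (natDegree_sum_fejerFactor_mul_basis_sq_lt hv) ?_
    simpa using Fintype.card_pos (α := ι)
  · simp [eval_finsetSum, hbasis, eval_fejerFactor_self]
  · simp [eval_finsetSum, derivative_mul, derivative_sq, hbasis, Finset.sum_add_distrib,
      eval_fejerFactor_self, eval_derivative_fejerFactor_self]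

end Fejer

end Lagrange

theorem abs_le_one_div_sqrt_of_sum_mul_sq_eq_one {ι : Type*} [Fintype ι] {w a : ι → ℝ} {c : ℝ}
    (hc : 0 < c) (hw : ∀ k, c ≤ w k) (hsum : ∑ k, w k * a k ^ 2 = 1) (i : ι) :
    |a i| ≤ 1 / √c := by
  have hle : c * a i ^ 2 ≤ 1 := calc
    c * a i ^ 2 ≤ w i * a i ^ 2 := by gcongr; exact hw i
    _ ≤ ∑ k, w k * a k ^ 2 :=
      Finset.single_le_sum (fun k _ ↦ mul_nonneg (hc.le.trans (hw k)) (sq_nonneg _))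
        (Finset.mem_univ i)
    _ = 1 := hsum
  rw [one_div, ← Real.sqrt_inv, ← one_div]
  exact Real.abs_le_sqrt ((le_div_iff₀' hc).2 hle)

section Nodes

variable {n : ℕ} (x : Fin n → ℝ)

theorem lagBasis_eq_eval_basis (k : Fin n) (t : ℝ) :
    lagBasis x k t = (Lagrange.basis Finset.univ x k).eval t := by
  simp only [Lagrange.basis, Lagrange.basisDivisor, eval_prod, eval_mul, eval_C, eval_sub,
    eval_X, lagBasis, div_eq_inv_mul]

theorem fejerV_eq_eval_fejerFactor (k : Fin n) (t : ℝ) :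
    fejerV x k t = (Lagrange.fejerFactor x k).eval t := by
  simp only [fejerV, Lagrange.fejerFactor, omegaPoly, Lagrange.nodal, eval_sub, eval_one,
    eval_mul, eval_C, eval_X, mul_comm]

theorem sum_fejerV_mul_lagBasis_sq (hn : 0 < n) (hx : Function.Injective x) (t : ℝ) :
    ∑ k, fejerV x k t * lagBasis x k t ^ 2 = 1 := by
  have : Nonempty (Fin n) := ⟨⟨0, hn⟩⟩
  simpa [fejerV_eq_eval_fejerFactor, lagBasis_eq_eval_basis, eval_finsetSum] using
    congrArg (eval t) (Lagrange.sum_fejerFactor_mul_basis_sq hx)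

end Nodes

theorem stmt17_general {n : ℕ} (hn : 1 ≤ n) (x : Fin n → ℝ)
    (hinj : Function.Injective x)
    (c : ℝ) (hc : 0 < c)
    (hsn : ∀ k : Fin n, ∀ t ∈ Set.Icc (-1 : ℝ) 1, c ≤ fejerV x k t) :
    (∀ t : ℝ, ∑ k, fejerV x k t * (lagBasis x k t) ^ 2 = 1) ∧
    (∀ i : Fin n, ∀ t ∈ Set.Icc (-1 : ℝ) 1, |lagBasis x i t| ≤ 1 / Real.sqrt c) :=
  ⟨sum_fejerV_mul_lagBasis_sq x hn hinj, fun i t ht ↦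
    abs_le_one_div_sqrt_of_sum_mul_sq_eq_one hc (fun k ↦ hsn k t ht)
      (sum_fejerV_mul_lagBasis_sq x hn hinj t) i⟩

theorem stmt17 {n : ℕ} (hn : 1 ≤ n) (x : Fin n → ℝ)
    (hinj : Function.Injective x)
    (hmem : ∀ i, x i ∈ Set.Icc (-1 : ℝ) 1)
    (c : ℝ) (hc : 0 < c)
    (hsn : ∀ k : Fin n, ∀ t ∈ Set.Icc (-1 : ℝ) 1, c ≤ fejerV x k t) :
    (∀ t : ℝ, ∑ k, fejerV x k t * (lagBasis x k t) ^ 2 = 1) ∧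
    (∀ i : Fin n, ∀ t ∈ Set.Icc (-1 : ℝ) 1, |lagBasis x i t| ≤ 1 / Real.sqrt c) :=
  stmt17_general hn x hinj c hc hsn
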